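/- Assume ∫_{−∞}^∞ q(t) dt = ∞, d₀ := sup_{x∈ℝ} d(x) < ∞, and that there exist α ≥ 1, β > 0 and x₁ > 0 such that for all x with |x| ≥ x₁ and all t with |t − x| ≤ β one has 1/α ≤ d(t)/d(x) ≤ α. Then for every s ∈ (0,∞) there exists a constant c(s) > 0 such that for all x ∈ ℝ: ∫_x^∞ exp(−s ∫_x^t q(ξ) dξ) dt ≤ c(s) d(x). -/

import Mathlib

/-!
Write `J(x) = ∫_x^∞ exp(-s ∫_x^t q)`. If `d ≤ r` on `[x, t]`, cutting `[x, t]` into blocks of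
length `2r` centred at points `c` with `d(c) ≤ r` shows that every block carries mass at least `2`,
so `∫_x^t q ≥ (t - x)/r - 2` and the integrand is dominated by `e^{2s} e^{-s(t-x)/r}`. With
`r = d₀` this gives the uniform bound `J ≤ A := e^{2s} d₀ / s`, which suffices on the compact
region `|x| < x₁`, where `d` is bounded below. For `|x| ≥ x₁` take `r = α d(x)` on `[x, x + β]`:
the integral over `[x, x + β]` is at most `e^{2s} r / s`, and the rest is at most
`e^{2s} e^{-sβ/r} J(x + β) ≤ e^{2s} (r / (sβ)) A`; both are `O(d(x))`.
-/

open MeasureTheory Filter Topology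
open scoped ENNReal

/-- The function `d(x) = inf { d > 0 : ∫_{x-d}^{x+d} q = 2 }`. -/
noncomputable def dq (q : ℝ → ℝ) (x : ℝ) : ℝ :=
  sInf {d : ℝ | 0 < d ∧ ∫ t in x - d..x + d, q t = 2}

open Set

lemma MeasureTheory.LocallyIntegrable.intervalIntegrable {q : ℝ → ℝ}
    (hq : LocallyIntegrable q volume) (a b : ℝ) : IntervalIntegrable q volume a b :=
  (hq.integrableOn_isCompact isCompact_uIcc).intervalIntegrable

lemma integral_eq_sub_of_locallyIntegrable {q : ℝ → ℝ} (hqloc : LocallyIntegrable q volume)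
    (a b : ℝ) :
    ∫ t in a..b, q t = (∫ t in 0..b, q t) - ∫ t in 0..a, q t :=
  (intervalIntegral.integral_interval_sub_left (hqloc.intervalIntegrable 0 b)
    (hqloc.intervalIntegrable 0 a)).symm

lemma continuous_primitive_of_locallyIntegrable {q : ℝ → ℝ}
    (hqloc : LocallyIntegrable q volume) :
    Continuous fun u => ∫ t in 0..u, q t :=
  intervalIntegral.continuous_primitive hqloc.intervalIntegrable 0

lemma Real.exp_neg_le_inv {u : ℝ} (hu : 0 < u) : Real.exp (-u) ≤ u⁻¹ := by
  rw [Real.exp_neg]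
  exact inv_anti₀ hu (by linarith [Real.add_one_le_exp u])

lemma setLIntegral_exp_le_of_sub_div_sub_two_le {s r x : ℝ} (hs : 0 < s) (hr : 0 < r)
    {S : Set ℝ} (hS : S ⊆ Ioi x) {F : ℝ → ℝ} (hF : ∀ t ∈ S, (t - x) / r - 2 ≤ F t) :
    ∫⁻ t in S, ENNReal.ofReal (Real.exp (-(s * F t))) ≤
      ENNReal.ofReal (Real.exp (2 * s) * r / s) := by
  set a := -(s / r)
  have ha : a < 0 := neg_neg_of_pos (by positivity)
  calc ∫⁻ t in S, ENNReal.ofReal (Real.exp (-(s * F t)))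
      ≤ ∫⁻ t in S, ENNReal.ofReal (Real.exp (2 * s - a * x) * Real.exp (a * t)) := by
        refine setLIntegral_mono (by fun_prop) fun t ht => ENNReal.ofReal_le_ofReal ?_
        rw [← Real.exp_add, Real.exp_le_exp]
        have := mul_le_mul_of_nonneg_left (hF t ht) hs.le
        have hsr : s * ((t - x) / r - 2) = -(a * t) + a * x - 2 * s := by simp only [a]; ring
        linarith
    _ ≤ ∫⁻ t in Ioi x, ENNReal.ofReal (Real.exp (2 * s - a * x) * Real.exp (a * t)) :=
        lintegral_mono_set hS
    _ = ENNReal.ofReal (∫ t in Ioi x, Real.exp (2 * s - a * x) * Real.exp (a * t)) :=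
        (ofReal_integral_eq_lintegral_ofReal ((integrableOn_exp_mul_Ioi ha x).const_mul _)
          (Eventually.of_forall fun t => by positivity)).symm
    _ = ENNReal.ofReal (Real.exp (2 * s) * r / s) := by
        rw [integral_const_mul, integral_exp_mul_Ioi ha, mul_div_assoc', mul_neg, ← Real.exp_add,
          sub_add_cancel]
        simp only [a]
        field_simp

section HalfWidth

variable {q : ℝ → ℝ}

lemma exists_two_lt_integral_symm (hq : ∀ x, 0 ≤ q x) (hqloc : LocallyIntegrable q volume)
    (hqint : ∫⁻ x : ℝ, ENNReal.ofReal (q x) = ⊤) (x : ℝ) :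
    ∃ D, 0 ≤ D ∧ 2 < ∫ t in x - D..x + D, q t := by
  have hcover : AECover volume atTop fun D : ℝ => Ioc (x - D) (x + D) :=
    aecover_Ioc ((tendsto_atBot_add_const_left _ x tendsto_neg_atTop_atBot).congr
      fun D => (sub_eq_add_neg x D).symm)
      (tendsto_atTop_add_const_left _ x tendsto_id)
  have hlim := hcover.lintegral_tendsto_of_countably_generated
    hqloc.aestronglyMeasurable.aemeasurable.ennreal_ofReal
  rw [hqint] at hlim
  obtain ⟨D, hD, hD0⟩ :=
    ((hlim.eventually (lt_mem_nhds (ENNReal.ofReal_lt_top (r := 2)))).and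
      (eventually_ge_atTop 0)).exists
  refine ⟨D, hD0, ?_⟩
  rw [← ofReal_integral_eq_lintegral_ofReal (hqloc.intervalIntegrable _ _).1
    (Eventually.of_forall hq), ENNReal.ofReal_lt_ofReal_iff', ← intervalIntegral.integral_of_le
    (by linarith)] at hD
  exact hD.1

lemma dq_mem (hq : ∀ x, 0 ≤ q x) (hqloc : LocallyIntegrable q volume)
    (hqint : ∫⁻ x : ℝ, ENNReal.ofReal (q x) = ⊤) (x : ℝ) :
    dq q x ∈ {d : ℝ | 0 < d ∧ ∫ t in x - d..x + d, q t = 2} := by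
  set m : ℝ → ℝ := fun d => ∫ t in x - d..x + d, q t
  have hm : Continuous m :=
    (((continuous_primitive_of_locallyIntegrable hqloc).comp (continuous_const_add x)).sub
      ((continuous_primitive_of_locallyIntegrable hqloc).comp (continuous_sub_left x))).congr
      fun d => (integral_eq_sub_of_locallyIntegrable hqloc _ _).symm
  -- `m 0 = 0`, so the constraint `0 < d` may be relaxed to the closed condition `0 ≤ d`
  have hS : {d : ℝ | 0 < d ∧ m d = 2} = Ici 0 ∩ m ⁻¹' {2} := by
    ext d
    refine ⟨fun h => ⟨h.1.le, h.2⟩, fun h => ⟨h.1.lt_of_ne ?_, h.2⟩⟩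
    rintro rfl
    simpa [m] using h.2
  obtain ⟨D, hD0, hD⟩ := exists_two_lt_integral_symm hq hqloc hqint x
  obtain ⟨d, hd, hmd⟩ : 2 ∈ m '' Icc 0 D :=
    intermediate_value_Icc hD0 hm.continuousOn ⟨by simp [m], hD.le⟩
  have hne : (Ici 0 ∩ m ⁻¹' {2}).Nonempty := ⟨d, hd.1, hmd⟩
  rw [dq, hS]
  exact (isClosed_Ici.inter (isClosed_singleton.preimage hm)).csInf_mem hne ⟨0, fun _ h => h.1⟩

lemma dq_pos (hq : ∀ x, 0 ≤ q x) (hqloc : LocallyIntegrable q volume)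
    (hqint : ∫⁻ x : ℝ, ENNReal.ofReal (q x) = ⊤) (x : ℝ) : 0 < dq q x :=
  (dq_mem hq hqloc hqint x).1

lemma two_le_integral_of_dq_le (hq : ∀ x, 0 ≤ q x) (hqloc : LocallyIntegrable q volume)
    (hqint : ∫⁻ x : ℝ, ENNReal.ofReal (q x) = ⊤) {c r : ℝ} (hr : dq q c ≤ r) :
    2 ≤ ∫ t in c - r..c + r, q t := by
  obtain ⟨hpos, hmass⟩ := dq_mem hq hqloc hqint c
  calc 2 = ∫ t in c - dq q c..c + dq q c, q t := hmass.symm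
    _ ≤ ∫ t in c - r..c + r, q t :=
      intervalIntegral.integral_mono_interval (by linarith) (by linarith) (by linarith)
        (Eventually.of_forall hq) (hqloc.intervalIntegrable _ _)

lemma exists_pos_forall_Icc_le_dq (hq : ∀ x, 0 ≤ q x) (hqloc : LocallyIntegrable q volume)
    (hqint : ∫⁻ x : ℝ, ENNReal.ofReal (q x) = ⊤) (a b : ℝ) :
    ∃ δ > 0, ∀ x ∈ Icc a b, δ ≤ dq q x := by
  set G : ℝ → ℝ := fun u => ∫ t in 0..u, q t
  have hG : UniformContinuousOn G (Icc (a - 1) (b + 1)) :=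
    isCompact_Icc.uniformContinuousOn_of_continuous
      (continuous_primitive_of_locallyIntegrable hqloc).continuousOn
  obtain ⟨ε, hε, hGε⟩ := Metric.uniformContinuousOn_iff.1 hG 2 two_pos
  set δ := min 1 (ε / 3)
  have hδ1 : δ ≤ 1 := min_le_left _ _
  have hδε : δ ≤ ε / 3 := min_le_right _ _
  have hδ : 0 < δ := by positivity
  refine ⟨δ, hδ, fun x hx => ?_⟩
  by_contra! hlt
  have h2 := two_le_integral_of_dq_le hq hqloc hqint hlt.le
  rw [integral_eq_sub_of_locallyIntegrable hqloc] at h2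
  have hclose := hGε (x + δ) ⟨by linarith [hx.1], by linarith [hx.2]⟩ (x - δ)
    ⟨by linarith [hx.1], by linarith [hx.2]⟩
    (by rw [Real.dist_eq, abs_lt]; constructor <;> linarith)
  rw [Real.dist_eq] at hclose
  linarith [le_abs_self (G (x + δ) - G (x - δ))]

end HalfWidth

section Growth

variable {q : ℝ → ℝ}

lemma sub_div_sub_two_le_integral (hq : ∀ x, 0 ≤ q x) (hqloc : LocallyIntegrable q volume)
    (hqint : ∫⁻ x : ℝ, ENNReal.ofReal (q x) = ⊤) {x t r : ℝ} (hr : 0 < r) (hxt : x ≤ t)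
    (hd : ∀ c ∈ Icc x t, dq q c ≤ r) : (t - x) / r - 2 ≤ ∫ ξ in x..t, q ξ := by
  have hblocks : ∀ n : ℕ, x + 2 * n * r ≤ t → 2 * n ≤ ∫ ξ in x..x + 2 * n * r, q ξ := by
    intro n
    induction n with
    | zero => intro _; simp
    | succ n ih =>
      intro hn
      push_cast at hn ⊢
      have hc : x + (2 * n + 1) * r ∈ Icc x t :=
        ⟨by nlinarith [n.cast_nonneg (α := ℝ)], by linarith⟩
      have h2 := two_le_integral_of_dq_le hq hqloc hqint (hd _ hc)
      rw [show x + (2 * n + 1) * r - r = x + 2 * n * r by ring,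
        show x + (2 * n + 1) * r + r = x + 2 * (n + 1) * r by ring] at h2
      rw [← intervalIntegral.integral_add_adjacent_intervals (hqloc.intervalIntegrable _ _)
        (hqloc.intervalIntegrable _ _)]
      linarith [ih (by linarith)]
  set n := ⌊(t - x) / (2 * r)⌋₊
  have hn : x + 2 * n * r ≤ t := by
    have := Nat.floor_le (show 0 ≤ (t - x) / (2 * r) by apply div_nonneg <;> linarith)
    rw [le_div_iff₀ (by positivity)] at this
    linarith
  have hn' : (t - x) / r - 2 < 2 * n := by
    have := Nat.lt_floor_add_one ((t - x) / (2 * r))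
    rw [div_lt_iff₀ (by positivity)] at this
    rw [div_sub' hr.ne', div_lt_iff₀ hr]
    linarith
  calc (t - x) / r - 2 ≤ 2 * n := hn'.le
    _ ≤ ∫ ξ in x..x + 2 * n * r, q ξ := hblocks n hn
    _ ≤ ∫ ξ in x..t, q ξ :=
      intervalIntegral.integral_mono_interval le_rfl (by nlinarith [n.cast_nonneg (α := ℝ)]) hn
        (Eventually.of_forall hq) (hqloc.intervalIntegrable _ _)

end Growth

noncomputable def decayIntegral (q : ℝ → ℝ) (s x : ℝ) : ℝ≥0∞ :=
  ∫⁻ t in Ioi x, ENNReal.ofReal (Real.exp (-(s * ∫ ξ in x..t, q ξ)))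

section DecayIntegral

variable {q : ℝ → ℝ} {s : ℝ}

lemma decayIntegral_le_of_forall_dq_le (hq : ∀ x, 0 ≤ q x) (hqloc : LocallyIntegrable q volume)
    (hqint : ∫⁻ x : ℝ, ENNReal.ofReal (q x) = ⊤) (hs : 0 < s) {r : ℝ} (hd : ∀ c, dq q c ≤ r)
    (x : ℝ) : decayIntegral q s x ≤ ENNReal.ofReal (Real.exp (2 * s) * r / s) :=
  setLIntegral_exp_le_of_sub_div_sub_two_le hs ((dq_pos hq hqloc hqint x).trans_le (hd x))
    subset_rfl fun _ ht => sub_div_sub_two_le_integral hq hqloc hqint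
      ((dq_pos hq hqloc hqint x).trans_le (hd x)) (le_of_lt ht) fun c _ => hd c

lemma decayIntegral_le_of_forall_Icc_dq_le (hq : ∀ x, 0 ≤ q x)
    (hqloc : LocallyIntegrable q volume) (hqint : ∫⁻ x : ℝ, ENNReal.ofReal (q x) = ⊤)
    (hs : 0 < s) {x L r B : ℝ} (hL : 0 < L) (hB : 0 ≤ B)
    (hd : ∀ c ∈ Icc x (x + L), dq q c ≤ r) (hJ : decayIntegral q s (x + L) ≤ ENNReal.ofReal B) :
    decayIntegral q s x ≤ ENNReal.ofReal (Real.exp (2 * s) * r / s * (1 + B / L)) := by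
  have hr : 0 < r := (dq_pos hq hqloc hqint x).trans_le (hd x ⟨le_rfl, by linarith⟩)
  have hgrowth : ∀ t ∈ Ioc x (x + L), (t - x) / r - 2 ≤ ∫ ξ in x..t, q ξ := fun t ht =>
    sub_div_sub_two_le_integral hq hqloc hqint hr ht.1.le fun c hc => hd c ⟨hc.1, hc.2.trans ht.2⟩
  have hcross : Real.exp (-(s * ∫ ξ in x..x + L, q ξ)) ≤ Real.exp (2 * s) * r / s / L := by
    have hmass := hgrowth (x + L) ⟨by linarith, le_rfl⟩
    rw [add_sub_cancel_left] at hmass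
    calc Real.exp (-(s * ∫ ξ in x..x + L, q ξ)) ≤ Real.exp (2 * s) * Real.exp (-(s * L / r)) := by
          rw [← Real.exp_add, Real.exp_le_exp]
          have := mul_le_mul_of_nonneg_left hmass hs.le
          rw [mul_sub, mul_div_assoc'] at this
          linarith
      _ ≤ Real.exp (2 * s) * (s * L / r)⁻¹ := by gcongr; exact Real.exp_neg_le_inv (by positivity)
      _ = Real.exp (2 * s) * r / s / L := by field_simp
  have htail : ∫⁻ t in Ioi (x + L), ENNReal.ofReal (Real.exp (-(s * ∫ ξ in x..t, q ξ))) ≤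
      ENNReal.ofReal (Real.exp (2 * s) * r / s / L) * decayIntegral q s (x + L) := by
    calc ∫⁻ t in Ioi (x + L), ENNReal.ofReal (Real.exp (-(s * ∫ ξ in x..t, q ξ)))
        ≤ ∫⁻ t in Ioi (x + L), ENNReal.ofReal (Real.exp (2 * s) * r / s / L) *
            ENNReal.ofReal (Real.exp (-(s * ∫ ξ in x + L..t, q ξ))) := by
          refine setLIntegral_mono' measurableSet_Ioi fun t _ => ?_
          rw [← intervalIntegral.integral_add_adjacent_intervals
            (hqloc.intervalIntegrable x (x + L)) (hqloc.intervalIntegrable _ t), mul_add, neg_add, Real.exp_add,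
            ENNReal.ofReal_mul (Real.exp_nonneg _)]
          gcongr
      _ = ENNReal.ofReal (Real.exp (2 * s) * r / s / L) * decayIntegral q s (x + L) :=
          lintegral_const_mul' _ _ ENNReal.ofReal_ne_top
  calc decayIntegral q s x
      ≤ (∫⁻ t in Ioc x (x + L), ENNReal.ofReal (Real.exp (-(s * ∫ ξ in x..t, q ξ)))) +
          ∫⁻ t in Ioi (x + L), ENNReal.ofReal (Real.exp (-(s * ∫ ξ in x..t, q ξ))) := by
        rw [decayIntegral, ← Ioc_union_Ioi_eq_Ioi (by linarith : x ≤ x + L)]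
        exact lintegral_union_le _ _ _
    _ ≤ ENNReal.ofReal (Real.exp (2 * s) * r / s) +
          ENNReal.ofReal (Real.exp (2 * s) * r / s / L) * ENNReal.ofReal B :=
        add_le_add (setLIntegral_exp_le_of_sub_div_sub_two_le hs hr Ioc_subset_Ioi_self hgrowth)
          (htail.trans (by gcongr))
    _ = ENNReal.ofReal (Real.exp (2 * s) * r / s * (1 + B / L)) := by
        rw [← ENNReal.ofReal_mul (by positivity), ← ENNReal.ofReal_add (by positivity)
          (by positivity)]
        ring_nf

end DecayIntegral

theorem stmt15_general (q : ℝ → ℝ) (hq : ∀ x, 0 ≤ q x)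
    (hqloc : LocallyIntegrable q volume)
    (hqint : ∫⁻ x : ℝ, ENNReal.ofReal (q x) = ⊤)
    (hd0 : BddAbove (Set.range (dq q)))
    (α β x₁ : ℝ) (hβ : 0 < β)
    (hreg : ∀ x : ℝ, x₁ ≤ |x| → ∀ t : ℝ, |t - x| ≤ β →
      1 / α ≤ dq q t / dq q x ∧ dq q t / dq q x ≤ α)
    (s : ℝ) (hs : 0 < s) :
    ∃ c : ℝ, 0 < c ∧ ∀ x : ℝ,
      (∫⁻ t in Set.Ioi x, ENNReal.ofReal (Real.exp (-(s * ∫ ξ in x..t, q ξ)))) ≤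
        ENNReal.ofReal (c * dq q x) := by
  obtain ⟨d₀, hd₀⟩ := hd0
  have hdq_le : ∀ c, dq q c ≤ d₀ := fun c => hd₀ (mem_range_self c)
  set A := Real.exp (2 * s) * d₀ / s
  have hA : 0 < A := by have := (dq_pos hq hqloc hqint 0).trans_le (hdq_le 0); positivity
  have hJ : ∀ x, decayIntegral q s x ≤ ENNReal.ofReal A :=
    decayIntegral_le_of_forall_dq_le hq hqloc hqint hs hdq_le
  obtain ⟨δ, hδ, hδle⟩ := exists_pos_forall_Icc_le_dq hq hqloc hqint (-x₁) x₁
  set C := Real.exp (2 * s) * α / s * (1 + A / β)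
  refine ⟨max (A / δ) C, lt_max_of_lt_left (by positivity), fun x => ?_⟩
  have hdx := dq_pos hq hqloc hqint x
  rcases lt_or_ge |x| x₁ with hx | hx
  · refine (hJ x).trans (ENNReal.ofReal_le_ofReal ?_)
    calc A = A / δ * δ := (div_mul_cancel₀ A hδ.ne').symm
      _ ≤ A / δ * dq q x := by gcongr; exact hδle x (abs_le.1 hx.le)
      _ ≤ max (A / δ) C * dq q x := by gcongr; exact le_max_left _ _
  · have hd : ∀ t ∈ Icc x (x + β), dq q t ≤ α * dq q x := fun t ht => by
      have := (hreg x hx t (abs_le.2 ⟨by linarith [ht.1], by linarith [ht.2]⟩)).2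
      rw [div_le_iff₀ hdx] at this
      linarith
    calc decayIntegral q s x ≤ ENNReal.ofReal (Real.exp (2 * s) * (α * dq q x) / s * (1 + A / β)) :=
          decayIntegral_le_of_forall_Icc_dq_le hq hqloc hqint hs hβ hA.le hd (hJ _)
      _ = ENNReal.ofReal (C * dq q x) := by congr 1; ring
      _ ≤ ENNReal.ofReal (max (A / δ) C * dq q x) := by gcongr; exact le_max_right _ _

theorem stmt15 (q : ℝ → ℝ) (hq : ∀ x, 0 ≤ q x)
    (hqloc : LocallyIntegrable q volume)
    (hqint : ∫⁻ x : ℝ, ENNReal.ofReal (q x) = ⊤)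
    (hd0 : BddAbove (Set.range (dq q)))
    (α β x₁ : ℝ) (hα : 1 ≤ α) (hβ : 0 < β) (hx₁ : 0 < x₁)
    (hreg : ∀ x : ℝ, x₁ ≤ |x| → ∀ t : ℝ, |t - x| ≤ β →
      1 / α ≤ dq q t / dq q x ∧ dq q t / dq q x ≤ α)
    (s : ℝ) (hs : 0 < s) :
    ∃ c : ℝ, 0 < c ∧ ∀ x : ℝ,
      (∫⁻ t in Set.Ioi x, ENNReal.ofReal (Real.exp (-(s * ∫ ξ in x..t, q ξ)))) ≤
        ENNReal.ofReal (c * dq q x) :=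
  stmt15_general q hq hqloc hqint hd0 α β x₁ hβ hreg s hs
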